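/- If Q*(word) = Tr of the composition as above, then the scalar probabilities satisfy the shift formula: for a quantum state ρ and E a cylinder event determined by coordinates n+1,…,n+m, Q_ρ(σ^{-n}(E)) = Q_{Φ^{(n)}(ρ)}'(E), where σ is the left shift, Q_ρ is the probability measure on 𝒜^ℕ with cylinder probabilities Tr(V_n(ā) ρ V_n(ā)†), and Q' is the corresponding measure built from the ensembles shifted by n with initial state Φ^{(n)}(ρ). -/

import Mathlib

/-!
Cutting a word after its `n`-th letter factors `V_{n+k}(u w) = V'_k(w) V_n(u)`, where `V'` is built
from the shifted Kraus operators. The event that the shifted sequence starts with `w` is the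
disjoint union over all prefixes `u` of the cylinders of `u w`, and since
`Σ_u V_n(u) ρ V_n(u)† = Φ⁽ⁿ⁾(ρ)` its probability is `Tr(V'_k(w) Φ⁽ⁿ⁾(ρ) V'_k(w)†)`; positivity of
`ρ` is what lets `ENNReal.ofReal` commute with this sum. So the push-forward of `μ` under the
`n`-fold shift agrees with `μ'` on prefix cylinders, and finite measures agreeing there are equal,
because every measurable cylinder is a finite union of prefix cylinders.
-/

open Matrix MeasureTheory
open scoped ComplexOrder

/-- Cylinder set of sequences whose first n coordinates equal a given word. -/
def cyl {𝒜 : Type*} (n : ℕ) (w : Fin n → 𝒜) : Set (ℕ → 𝒜) :=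
  {x | ∀ i : Fin n, x i = w i}

/-- V_n(a_1,…,a_n) = v_{a_n,n} ⋯ v_{a_1,1} (times indexed from 0 here). -/
noncomputable def Vw {d : ℕ} {𝒜 : Type*} (v : ℕ → 𝒜 → Matrix (Fin d) (Fin d) ℂ) :
    (n : ℕ) → (Fin n → 𝒜) → Matrix (Fin d) (Fin d) ℂ
  | 0, _ => 1
  | n + 1, w => v n (w (Fin.last n)) * Vw v n (fun i => w i.castSucc)

/-- Φ^{(n)} = φ_n ∘ ⋯ ∘ φ_1 where φ_k(M) = Σ_a v_{a,k} M v_{a,k}†. -/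
noncomputable def Phi {d : ℕ} {𝒜 : Type*} [Fintype 𝒜]
    (v : ℕ → 𝒜 → Matrix (Fin d) (Fin d) ℂ) :
    ℕ → Matrix (Fin d) (Fin d) ℂ → Matrix (Fin d) (Fin d) ℂ
  | 0, M => M
  | n + 1, M => ∑ a, v n a * Phi v n M * (v n a)ᴴ

section Kraus

variable {d : ℕ} {𝒜 : Type*} (v : ℕ → 𝒜 → Matrix (Fin d) (Fin d) ℂ)

lemma Vw_snoc (n : ℕ) (w : Fin n → 𝒜) (a : 𝒜) :
    Vw v (n + 1) (Fin.snoc w a) = v n a * Vw v n w := by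
  simp only [Vw, Fin.snoc_last, Fin.snoc_castSucc]

lemma Vw_append {n : ℕ} (u : Fin n → 𝒜) :
    ∀ {k : ℕ} (w : Fin k → 𝒜),
      Vw v (n + k) (Fin.append u w) = Vw (fun j => v (j + n)) k w * Vw v n u
  | 0, w => by rw [Fin.append_right_nil u w rfl, Vw, one_mul]; rfl
  | k + 1, w => by
    rw [← Fin.snoc_init_self w, Fin.append_snoc]
    refine (Vw_snoc v (n + k) _ _).trans ?_
    rw [Vw_append u (Fin.init w), Vw_snoc, ← mul_assoc, Nat.add_comm n k]

lemma sum_Vw_mul_mul_conjTranspose [Fintype 𝒜] (M : Matrix (Fin d) (Fin d) ℂ) :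
    ∀ n : ℕ, ∑ u : Fin n → 𝒜, Vw v n u * M * (Vw v n u)ᴴ = Phi v n M
  | 0 => by simp [Vw, Phi]
  | n + 1 => by
    rw [← (Fin.snocEquiv fun _ => 𝒜).sum_comp, Fintype.sum_prod_type, Phi,
      ← sum_Vw_mul_mul_conjTranspose M n]
    refine Finset.sum_congr rfl fun a _ => ?_
    simp only [Fin.snocEquiv, Equiv.coe_fn_mk, Vw_snoc, conjTranspose_mul, Finset.mul_sum,
      Finset.sum_mul, mul_assoc]

lemma sum_Vw_append_mul_mul_conjTranspose [Fintype 𝒜] (M : Matrix (Fin d) (Fin d) ℂ)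
    (n : ℕ) {k : ℕ} (w : Fin k → 𝒜) :
    ∑ u : Fin n → 𝒜, Vw v (n + k) (Fin.append u w) * M * (Vw v (n + k) (Fin.append u w))ᴴ
      = Vw (fun j => v (j + n)) k w * Phi v n M * (Vw (fun j => v (j + n)) k w)ᴴ := by
  simp only [Vw_append, conjTranspose_mul, ← sum_Vw_mul_mul_conjTranspose v M n,
    Finset.mul_sum, Finset.sum_mul, mul_assoc]

end Kraus

section Cylinders

variable {𝒜 : Type*}

lemma cyl_zero (w : Fin 0 → 𝒜) : cyl 0 w = Set.univ :=
  Set.eq_univ_of_forall fun _ i => i.elim0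

lemma pairwise_disjoint_cyl (k : ℕ) :
    Pairwise (Function.onFun Disjoint fun w : Fin k → 𝒜 => cyl k w) :=
  fun _ _ hne => Set.disjoint_left.mpr fun _ hx hx' =>
    hne (funext fun i => (hx i).symm.trans (hx' i))

lemma preimage_shift_cyl (n : ℕ) {k : ℕ} (w : Fin k → 𝒜) :
    (fun x (j : ℕ) => x (j + n)) ⁻¹' cyl k w = ⋃ u : Fin n → 𝒜, cyl (n + k) (Fin.append u w) := by
  ext x
  simp only [Set.mem_preimage, Set.mem_iUnion, cyl, Set.mem_ofPred_eq]
  constructor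
  · intro hx
    refine ⟨fun i => x i, Fin.addCases (fun i => ?_) (fun i => ?_)⟩
    · rw [Fin.append_left]; rfl
    · rw [Fin.append_right, ← hx i, Fin.val_natAdd, Nat.add_comm]
  · rintro ⟨u, hx⟩ i
    rw [← Fin.append_right u w i, ← hx, Fin.val_natAdd, Nat.add_comm]

lemma setOf_restrict_mem_eq_biUnion_cyl (k : ℕ) (S : Set (Fin k → 𝒜)) :
    {x : ℕ → 𝒜 | (fun i : Fin k => x i) ∈ S} = ⋃ w ∈ S, cyl k w := by
  ext x
  simp only [Set.mem_ofPred_eq, Set.mem_iUnion, cyl, exists_prop]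
  exact ⟨fun hx => ⟨_, hx, fun _ => rfl⟩, fun ⟨w, hw, hxw⟩ => funext hxw ▸ hw⟩

lemma exists_eq_setOf_restrict_mem_of_mem_measurableCylinders [MeasurableSpace 𝒜]
    {t : Set (ℕ → 𝒜)} (ht : t ∈ measurableCylinders fun _ : ℕ => 𝒜) :
    ∃ (k : ℕ) (S : Set (Fin k → 𝒜)), t = {x | (fun i : Fin k => x i) ∈ S} := by
  obtain ⟨I, S, -, rfl⟩ := (mem_measurableCylinders t).mp ht
  have hI : ∀ i ∈ I, i < I.sup id + 1 :=
    fun i hi => Nat.lt_succ_of_le (Finset.le_sup (f := id) hi)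
  exact ⟨I.sup id + 1, {w | (fun i : I => w ⟨i, hI i i.2⟩) ∈ S}, rfl⟩

variable [MeasurableSpace 𝒜] [MeasurableSingletonClass 𝒜]

lemma measurableSet_cyl (k : ℕ) (w : Fin k → 𝒜) : MeasurableSet (cyl k w) := by
  have : cyl k w = ⋂ i : Fin k, (fun x : ℕ → 𝒜 => x i) ⁻¹' {w i} := by ext; simp [cyl]
  exact this ▸ MeasurableSet.iInter fun i => measurable_pi_apply _ (measurableSet_singleton _)

lemma measure_biUnion_cyl (μ : Measure (ℕ → 𝒜)) {k : ℕ} (S : Set (Fin k → 𝒜)) [Countable S] :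
    μ (⋃ w ∈ S, cyl k w) = ∑' w : S, μ (cyl k w) :=
  measure_biUnion S.to_countable (fun _ _ _ _ hne => pairwise_disjoint_cyl k hne)
    fun w _ => measurableSet_cyl k w

lemma measure_preimage_shift_cyl [Fintype 𝒜] (μ : Measure (ℕ → 𝒜)) (n : ℕ) {k : ℕ}
    (w : Fin k → 𝒜) :
    μ ((fun x (j : ℕ) => x (j + n)) ⁻¹' cyl k w)
      = ∑ u : Fin n → 𝒜, μ (cyl (n + k) (Fin.append u w)) := by
  rw [preimage_shift_cyl, measure_iUnion _ fun _ => measurableSet_cyl _ _, tsum_fintype]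
  intro u u' hne
  refine pairwise_disjoint_cyl (n + k) fun h => hne (funext fun i => ?_)
  simpa only [Fin.append_left] using congrFun h (Fin.castAdd k i)

lemma MeasureTheory.Measure.ext_of_cyl [Fintype 𝒜] {μ ν : Measure (ℕ → 𝒜)} [IsFiniteMeasure μ]
    (h : ∀ k (w : Fin k → 𝒜), μ (cyl k w) = ν (cyl k w)) : μ = ν := by
  refine ext_of_generate_finite _ generateFrom_measurableCylinders.symm
    isPiSystem_measurableCylinders (fun t ht => ?_) ?_
  · obtain ⟨k, S, rfl⟩ := exists_eq_setOf_restrict_mem_of_mem_measurableCylinders ht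
    rw [setOf_restrict_mem_eq_biUnion_cyl, measure_biUnion_cyl, measure_biUnion_cyl]
    exact tsum_congr fun w => h k w
  · simpa only [cyl_zero] using h 0 Fin.elim0

end Cylinders

theorem stmt8_general {d : ℕ} {𝒜 : Type*} [Fintype 𝒜] [MeasurableSpace 𝒜]
    [MeasurableSingletonClass 𝒜]
    (v : ℕ → 𝒜 → Matrix (Fin d) (Fin d) ℂ)
    (ρ : Matrix (Fin d) (Fin d) ℂ) (hρ : ρ.PosSemidef)
    (n : ℕ)
    (μ μ' : Measure (ℕ → 𝒜)) [IsProbabilityMeasure μ]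
    (hμ : ∀ k (w : Fin k → 𝒜),
      μ (cyl k w)
        = ENNReal.ofReal (Matrix.trace (Vw v k w * ρ * (Vw v k w)ᴴ)).re)
    (hμ' : ∀ k (w : Fin k → 𝒜),
      μ' (cyl k w)
        = ENNReal.ofReal (Matrix.trace
            (Vw (fun j => v (j + n)) k w * Phi v n ρ
              * (Vw (fun j => v (j + n)) k w)ᴴ)).re) :
    ∀ E : Set (ℕ → 𝒜), MeasurableSet E →
      μ ((fun x (k : ℕ) => x (k + n)) ⁻¹' E) = μ' E := by
  intro E hE
  have hshift : Measurable fun (x : ℕ → 𝒜) (k : ℕ) => x (k + n) :=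
    measurable_pi_lambda _ fun k => measurable_pi_apply _
  suffices μ.map (fun x (k : ℕ) => x (k + n)) = μ' by rw [← this, Measure.map_apply hshift hE]
  refine Measure.ext_of_cyl fun k w => ?_
  have htrace_nonneg : ∀ u : Fin n → 𝒜,
      0 ≤ (trace (Vw v (n + k) (Fin.append u w) * ρ * (Vw v (n + k) (Fin.append u w))ᴴ)).re :=
    fun u => (RCLike.nonneg_iff.mp (hρ.mul_mul_conjTranspose_same _).trace_nonneg).1
  rw [Measure.map_apply hshift (measurableSet_cyl k w), measure_preimage_shift_cyl, hμ',
    ← sum_Vw_append_mul_mul_conjTranspose, trace_sum, Complex.re_sum,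
    ENNReal.ofReal_sum_of_nonneg fun u _ => htrace_nonneg u]
  exact Finset.sum_congr rfl fun u _ => hμ _ _

/-- Shift formula for the scalar probabilities: Q_ρ(σ^{-n}(E)) = Q'_{Φ^{(n)}(ρ)}(E),
where Q' is built from the ensemble shifted by n and initial state Φ^{(n)}(ρ). -/
theorem stmt8 {d : ℕ} {𝒜 : Type*} [Fintype 𝒜] [MeasurableSpace 𝒜]
    [MeasurableSingletonClass 𝒜]
    (v : ℕ → 𝒜 → Matrix (Fin d) (Fin d) ℂ)
    (hv : ∀ k, ∑ a, (v k a)ᴴ * v k a = 1)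
    (ρ : Matrix (Fin d) (Fin d) ℂ) (hρ : ρ.PosSemidef) (htr : ρ.trace = 1)
    (n : ℕ)
    (μ μ' : Measure (ℕ → 𝒜)) [IsProbabilityMeasure μ] [IsProbabilityMeasure μ']
    (hμ : ∀ k (w : Fin k → 𝒜),
      μ (cyl k w)
        = ENNReal.ofReal (Matrix.trace (Vw v k w * ρ * (Vw v k w)ᴴ)).re)
    (hμ' : ∀ k (w : Fin k → 𝒜),
      μ' (cyl k w)
        = ENNReal.ofReal (Matrix.trace
            (Vw (fun j => v (j + n)) k w * Phi v n ρ
              * (Vw (fun j => v (j + n)) k w)ᴴ)).re) :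
    ∀ E : Set (ℕ → 𝒜), MeasurableSet E →
      μ ((fun x (k : ℕ) => x (k + n)) ⁻¹' E) = μ' E :=
  stmt8_general v ρ hρ n μ μ' hμ hμ'
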